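/- Linearization error bound for awakening: if ∇f is Lipschitz with constant Λ on a ball around 0 and f's gradient at 0 is G, then the gradient-descent iterates from W(0)=0 satisfy ‖W(t) + ηtG‖ ≤ η²Λ‖G‖ · t(t−1)/2 · (1+ηΛ)^t, so for small t the trajectory is within O(t²) of the exact linear path −ηtG. -/

import Mathlib

set_option maxHeartbeats 1000000 in


/-- Linearization error bound for gradient awakening: if `f` has `Λ`-Lipschitz gradient
and `G = ∇f(0)`, the gradient-descent iterates `W (t+1) = W t - η ∇f(W t)` from
`W 0 = 0` satisfy
`‖W t + η t G‖ ≤ η² Λ ‖G‖ (t(t-1)/2) (1 + η Λ)^t`,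
so for small `t` the trajectory is within `O(t²)` of the exact linear path `-η t G`.
Auxiliary weight matrices `ℝ^{C×d}` are modeled as the Euclidean space on
`Fin C × Fin d`. -/
theorem linearization_error_bound {C d : ℕ}
    (f : EuclideanSpace ℝ (Fin C × Fin d) → ℝ) (hf : Differentiable ℝ f)
    (Λ : NNReal) (hΛ : LipschitzWith Λ (gradient f))
    (G : EuclideanSpace ℝ (Fin C × Fin d)) (hG : G = gradient f 0)
    (η : ℝ) (hη : 0 < η)
    (W : ℕ → EuclideanSpace ℝ (Fin C × Fin d))
    (hW0 : W 0 = 0)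
    (hstep : ∀ t, W (t + 1) = W t - η • gradient f (W t)) :
    ∀ t : ℕ, ‖W t + (η * t) • G‖ ≤
      η ^ 2 * Λ * ‖G‖ * ((t : ℝ) * ((t : ℝ) - 1) / 2) * (1 + η * Λ) ^ t := by
  intro t
  induction t with
  | zero => simp [hW0]
  | succ t ih =>
    have hΛ0 : (0:ℝ) ≤ Λ := Λ.coe_nonneg
    have hG0 : (0:ℝ) ≤ ‖G‖ := norm_nonneg _
    have ht0 : (0:ℝ) ≤ (t:ℝ) := Nat.cast_nonneg t
    have hgrad : ‖gradient f (W t) - G‖ ≤ Λ * ‖W t‖ := by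
      rw [hG]
      have := hΛ.dist_le_mul (W t) 0
      simpa [dist_eq_norm] using this
    have hWt : ‖W t‖ ≤ ‖W t + (η * t) • G‖ + η * t * ‖G‖ := by
      have h1 : W t = (W t + (η * t) • G) - (η * t) • G := by abel
      calc ‖W t‖ = ‖(W t + (η * t) • G) - (η * t) • G‖ := by rw [← h1]
        _ ≤ ‖W t + (η * t) • G‖ + ‖(η * t) • G‖ := norm_sub_le _ _
        _ = ‖W t + (η * t) • G‖ + η * t * ‖G‖ := by
            rw [norm_smul, Real.norm_eq_abs, abs_of_nonneg (by positivity)]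
    have hid : W (t + 1) + (η * ((t : ℕ) + 1 : ℕ)) • G
        = (W t + (η * t) • G) - η • (gradient f (W t) - G) := by
      rw [hstep t]
      push_cast
      module
    have key : ‖W (t + 1) + (η * ((t : ℕ) + 1 : ℕ)) • G‖
        ≤ ‖W t + (η * t) • G‖ + η * (Λ * ‖W t‖) := by
      rw [hid]
      calc ‖(W t + (η * t) • G) - η • (gradient f (W t) - G)‖
          ≤ ‖W t + (η * t) • G‖ + ‖η • (gradient f (W t) - G)‖ := norm_sub_le _ _
        _ ≤ ‖W t + (η * t) • G‖ + η * (Λ * ‖W t‖) := by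
            rw [norm_smul, Real.norm_eq_abs, abs_of_nonneg hη.le]
            exact add_le_add_right (mul_le_mul_of_nonneg_left hgrad hη.le) _
    have hpow : (1:ℝ) ≤ (1 + η * Λ) ^ t := one_le_pow₀ (by nlinarith)
    have hpow' : (1:ℝ) ≤ (1 + η * Λ) ^ (t + 1) := one_le_pow₀ (by nlinarith)
    have hE0 : (0:ℝ) ≤ ‖W t + (η * t) • G‖ := norm_nonneg _
    calc ‖W (t + 1) + (η * ((t + 1 : ℕ) : ℝ)) • G‖
        ≤ ‖W t + (η * t) • G‖ + η * (Λ * ‖W t‖) := key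
      _ ≤ ‖W t + (η * t) • G‖ + η * (Λ * (‖W t + (η * t) • G‖ + η * t * ‖G‖)) := by
          nlinarith [mul_le_mul_of_nonneg_left hWt hΛ0]
      _ ≤ η ^ 2 * Λ * ‖G‖ * (((t + 1 : ℕ) : ℝ) * (((t + 1 : ℕ) : ℝ) - 1) / 2)
            * (1 + η * Λ) ^ (t + 1) := by
          push_cast
          have hp0 : (0:ℝ) ≤ 1 + η * Λ := by nlinarith
          have hpt : ((t:ℝ)) ≤ (t:ℝ) * (1 + η * Λ) ^ (t + 1) := by
            nlinarith [one_le_pow₀ (by nlinarith : (1:ℝ) ≤ 1 + η * Λ) (n := t + 1)]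
          have hc : (0:ℝ) ≤ η ^ 2 * Λ * ‖G‖ :=
            mul_nonneg (mul_nonneg (sq_nonneg η) hΛ0) hG0
          calc ‖W t + (η * t) • G‖ + η * (Λ * (‖W t + (η * t) • G‖ + η * (t:ℝ) * ‖G‖))
              = (1 + η * Λ) * ‖W t + (η * t) • G‖ + (η ^ 2 * Λ * ‖G‖) * (t:ℝ) := by ring
            _ ≤ (1 + η * Λ) * (η ^ 2 * Λ * ‖G‖ * ((t:ℝ) * ((t:ℝ) - 1) / 2) * (1 + η * Λ) ^ t)
                + (η ^ 2 * Λ * ‖G‖) * ((t:ℝ) * (1 + η * Λ) ^ (t + 1)) :=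
              add_le_add (mul_le_mul_of_nonneg_left ih hp0)
                (mul_le_mul_of_nonneg_left hpt hc)
            _ = η ^ 2 * Λ * ‖G‖ * (((t:ℝ) + 1) * (((t:ℝ) + 1) - 1) / 2) * (1 + η * Λ) ^ (t + 1) := by
                rw [pow_succ]; ring
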